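/- At every nonzero point v ∈ ℂ^4 with g1(v) = 0 and g2(v) = 0, the gradient vectors ∇g1(v) and ∇g2(v) are linearly independent over ℂ. (Equivalently, the complete intersection curve C = {g1 = g2 = 0} ⊂ P^3(ℂ), which has degree 9 and is isomorphic to the modular curve X(9), is a smooth projective curve.) -/

import Mathlib

/-!
Write `P = 2x₁x₂ − x₄²`, `Q = x₁² − 2x₂x₄`, `R = x₂² + 2x₁x₄`, so that `∇g1 = (P, Q, 0, −R)` and
`∇g2 = (R, P, −3x₃², Q)`. The quadrics `P, Q, R` have no common zero besides `0`, which gives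
`∇g1(v) ≠ 0` (then `g2 = −x₃³` kills `x₃`). If `∇g2 = μ∇g1`, then `x₃ = 0` and
`(R, P, Q) = μ(P, Q, −R)`, which forces `μ³ = −1`. Euler's relation `x₁P + x₂Q − x₄R = 3g1 = 0`
then reads `Q(μx₁ + x₂ − μ²x₄) = 0`, so `x₂ = μ²x₄ − μx₁`, and substituting this leaves
`μx₁² + x₄² = 0 = x₁(μ²x₁ + 2x₄)`, whose only solution is `x₁ = x₄ = 0`.
-/

/-- `g1 = x1²x2 − x2²x4 − x1x4²`. -/
def polyG1 (v : Fin 4 → ℂ) : ℂ := v 0 ^ 2 * v 1 - v 1 ^ 2 * v 3 - v 0 * v 3 ^ 2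

/-- `g2 = x1x2² − x3³ + x1²x4 − x2x4²`. -/
def polyG2 (v : Fin 4 → ℂ) : ℂ := v 0 * v 1 ^ 2 - v 2 ^ 3 + v 0 ^ 2 * v 3 - v 1 * v 3 ^ 2

/-- The gradient of `g1`: `(2x1x2 − x4², x1² − 2x2x4, 0, −x2² − 2x1x4)`. -/
def gradG1 (v : Fin 4 → ℂ) : Fin 4 → ℂ :=
  ![2 * v 0 * v 1 - v 3 ^ 2, v 0 ^ 2 - 2 * v 1 * v 3, 0, -(v 1 ^ 2) - 2 * v 0 * v 3]

/-- The gradient of `g2`: `(x2² + 2x1x4, 2x1x2 − x4², −3x3², x1² − 2x2x4)`. -/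
def gradG2 (v : Fin 4 → ℂ) : Fin 4 → ℂ :=
  ![v 1 ^ 2 + 2 * v 0 * v 3, 2 * v 0 * v 1 - v 3 ^ 2, -3 * v 2 ^ 2, v 0 ^ 2 - 2 * v 1 * v 3]

section

variable {R : Type*} [CommRing R] [IsDomain R]

theorem eq_zero_of_quadrics_eq_zero (h3 : (3 : R) ≠ 0) {a b d : R}
    (hP : 2 * a * b - d ^ 2 = 0) (hQ : a ^ 2 - 2 * b * d = 0) (hR : b ^ 2 + 2 * a * d = 0) :
    a = 0 ∧ b = 0 ∧ d = 0 := by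
  have hab : a * b = 0 := by
    have : 3 * (3 * (a * b) ^ 2) = 0 := by
      linear_combination 4 * a * b * hP + b ^ 2 * hQ + 2 * b * d * hR
    simpa [h3] using this
  have hd : d = 0 := pow_eq_zero_iff two_ne_zero |>.mp (by linear_combination 2 * hab - hP)
  refine ⟨pow_eq_zero_iff two_ne_zero |>.mp ?_, pow_eq_zero_iff two_ne_zero |>.mp ?_, hd⟩
  · linear_combination hQ + 2 * b * hd
  · linear_combination hR - 2 * a * hd

theorem eq_zero_of_smul_quadrics_eq (h3 : (3 : R) ≠ 0) {a b d μ : R}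
    (hcubic : a ^ 2 * b - b ^ 2 * d - a * d ^ 2 = 0)
    (hP : μ * (2 * a * b - d ^ 2) = b ^ 2 + 2 * a * d)
    (hQ : μ * (a ^ 2 - 2 * b * d) = 2 * a * b - d ^ 2)
    (hR : μ * (-b ^ 2 - 2 * a * d) = a ^ 2 - 2 * b * d) :
    a = 0 ∧ b = 0 ∧ d = 0 := by
  by_cases hQ0 : a ^ 2 - 2 * b * d = 0
  · refine eq_zero_of_quadrics_eq_zero h3 ?_ hQ0 ?_
    · rw [← hQ, hQ0, mul_zero]
    · rw [← hP, ← hQ, hQ0, mul_zero, mul_zero]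
  have hμ : μ ^ 3 = -1 := by
    have : (a ^ 2 - 2 * b * d) * (μ ^ 3 + 1) = 0 := by
      linear_combination μ ^ 2 * hQ + μ * hP - hR
    exact eq_neg_of_add_eq_zero_left <| (mul_eq_zero.mp this).resolve_left hQ0
  have hb : b = μ ^ 2 * d - μ * a := by
    have : (a ^ 2 - 2 * b * d) * (μ * a + b - μ ^ 2 * d) = 0 := by
      linear_combination 3 * hcubic + (a - μ * d) * hQ - d * hP
    linear_combination (mul_eq_zero.mp this).resolve_left hQ0
  subst hb
  have hda : μ * a ^ 2 + d ^ 2 = 0 := by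
    have : 3 * (μ * a ^ 2 + d ^ 2) = 0 := by linear_combination hQ + 2 * d ^ 2 * hμ
    exact (mul_eq_zero.mp this).resolve_left h3
  have had : a * (μ ^ 2 * a + 2 * d) = 0 := by
    have : 3 * (a * (μ ^ 2 * a + 2 * d)) = 0 := by
      linear_combination -hP - (μ * d ^ 2 - 4 * a * d) * hμ
    exact (mul_eq_zero.mp this).resolve_left h3
  have hμ0 : μ ≠ 0 := by rintro rfl; norm_num at hμ
  have ha : a = 0 := by
    have : 3 * μ * a ^ 4 = 0 := by
      linear_combination 4 * a ^ 2 * hda + a * (μ ^ 2 * a - 2 * d) * had - μ * a ^ 4 * hμ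
    simpa [h3, hμ0] using this
  have hd : d = 0 := pow_eq_zero_iff two_ne_zero |>.mp (by linear_combination hda - μ * a * ha)
  exact ⟨ha, by rw [ha, hd]; ring, hd⟩

end

theorem eq_zero_of_apply_eq_zero_fin_four {M : Type*} [Zero M] {v : Fin 4 → M}
    (h0 : v 0 = 0) (h1 : v 1 = 0) (h2 : v 2 = 0) (h3 : v 3 = 0) : v = 0 := by
  ext i; fin_cases i <;> assumption

theorem gradG1_ne_zero {v : Fin 4 → ℂ} (hv : v ≠ 0) (h2 : polyG2 v = 0) : gradG1 v ≠ 0 := by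
  intro hgrad
  have hP := congrFun hgrad 0
  have hQ := congrFun hgrad 1
  have hR := congrFun hgrad 3
  simp only [gradG1, Pi.zero_apply, Matrix.cons_val] at hP hQ hR
  obtain ⟨ha, hb, hd⟩ := eq_zero_of_quadrics_eq_zero three_ne_zero hP hQ
    (by linear_combination -hR)
  have hc : v 2 = 0 := pow_eq_zero_iff three_ne_zero |>.mp <| by
    simp only [polyG2, ha, hb, hd] at h2; linear_combination -h2
  exact hv (eq_zero_of_apply_eq_zero_fin_four ha hb hc hd)

theorem smul_gradG1_ne_gradG2 {v : Fin 4 → ℂ} (hv : v ≠ 0) (h1 : polyG1 v = 0) (μ : ℂ) :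
    μ • gradG1 v ≠ gradG2 v := by
  intro h
  have hP := congrFun h 0
  have hQ := congrFun h 1
  have h2 := congrFun h 2
  have hR := congrFun h 3
  simp only [gradG1, gradG2, Pi.smul_apply, smul_eq_mul, Matrix.cons_val] at hP hQ h2 hR
  obtain ⟨ha, hb, hd⟩ := eq_zero_of_smul_quadrics_eq three_ne_zero h1 hP hQ hR
  have hc : v 2 = 0 := pow_eq_zero_iff two_ne_zero |>.mp <| by
    simpa using h2.symm
  exact hv (eq_zero_of_apply_eq_zero_fin_four ha hb hc hd)

/-- At every nonzero common zero of `g1` and `g2`, the gradients of `g1` and `g2`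
are linearly independent: the complete intersection curve `C = {g1 = g2 = 0} ⊂ P³`
(of degree 9, isomorphic to the modular curve `X(9)`) is smooth. -/
theorem gradients_linearIndependent (v : Fin 4 → ℂ) (hv : v ≠ 0)
    (h1 : polyG1 v = 0) (h2 : polyG2 v = 0) :
    LinearIndependent ℂ ![gradG1 v, gradG2 v] :=
  (LinearIndependent.pair_iff' (gradG1_ne_zero hv h2)).2 (smul_gradG1_ne_gradG2 hv h1)
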